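/- Let n be a positive integer and let r₁,…,rₙ and h₁,…,hₙ be real numbers. Set r = ∑_{j=1}^{n} r_j and h = ∑_{j=1}^{n} h_j, and suppose that (r² + h²)^{1/2} = ∑_{j=1}^{n} (r_j² + h_j²)^{1/2}. Then ∑_{j=2}^{n} r_j h_j = ∑_{j=2}^{n} h_j (∑_{i=1}^{j} r_i + ∑_{i=1}^{j−1} r_i) − 2 ∑_{j=1}^{n−1} r_j ∑_{k=1}^{n−j} h_{j+k}. -/

import Mathlib

open Finset

lemma key_swap (n : ℕ) (r h : ℕ → ℝ) :
    ∑ j ∈ Icc 2 n, h j * ∑ i ∈ Icc 1 (j - 1), r i =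
      ∑ j ∈ Icc 1 (n - 1), r j * ∑ k ∈ Icc 1 (n - j), h (j + k) := by
  simp_rw [Finset.mul_sum, Finset.sum_sigma']
  refine Finset.sum_bij' (fun x _ => ⟨x.2, x.1 - x.2⟩) (fun x _ => ⟨x.1 + x.2, x.1⟩)
    ?_ ?_ ?_ ?_ ?_
  · rintro ⟨j, i⟩ hm
    simp only [mem_sigma, mem_Icc] at hm ⊢
    omega
  · rintro ⟨j, k⟩ hm
    simp only [mem_sigma, mem_Icc] at hm ⊢
    omega
  · rintro ⟨j, i⟩ hm
    simp only [mem_sigma, mem_Icc] at hm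
    simp only [Sigma.mk.inj_iff]
    exact ⟨by omega, heq_of_eq rfl⟩
  · rintro ⟨j, k⟩ hm
    simp only [Sigma.mk.inj_iff]
    exact ⟨trivial, heq_of_eq (by omega)⟩
  · rintro ⟨j, i⟩ hm
    simp only [mem_sigma, mem_Icc] at hm
    have : i + (j - i) = j := by omega
    rw [this, mul_comm]

/-- **area method identity.** Let `r₁,…,rₙ` and `h₁,…,hₙ` be real numbers
with `r = ∑ r_j`, `h = ∑ h_j` and `(r² + h²)^{1/2} = ∑_j (r_j² + h_j²)^{1/2}`. Then
`∑_{j=2}^{n} r_j h_j = ∑_{j=2}^{n} h_j (∑_{i=1}^{j} r_i + ∑_{i=1}^{j−1} r_i)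
  − 2 ∑_{j=1}^{n−1} r_j ∑_{k=1}^{n−j} h_{j+k}`. -/
theorem area_method_identity (n : ℕ) (hn : 0 < n) (r h : ℕ → ℝ)
    (hyp : Real.sqrt ((∑ j ∈ Icc 1 n, r j) ^ 2 + (∑ j ∈ Icc 1 n, h j) ^ 2) =
      ∑ j ∈ Icc 1 n, Real.sqrt ((r j) ^ 2 + (h j) ^ 2)) :
    ∑ j ∈ Icc 2 n, r j * h j =
      (∑ j ∈ Icc 2 n, h j * ((∑ i ∈ Icc 1 j, r i) + ∑ i ∈ Icc 1 (j - 1), r i)) -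
        2 * ∑ j ∈ Icc 1 (n - 1), r j * ∑ k ∈ Icc 1 (n - j), h (j + k) := by
  have step : ∀ j ∈ Icc 2 n,
      h j * ((∑ i ∈ Icc 1 j, r i) + ∑ i ∈ Icc 1 (j - 1), r i) =
        r j * h j + 2 * (h j * ∑ i ∈ Icc 1 (j - 1), r i) := by
    intro j hj
    simp only [mem_Icc] at hj
    have hj1 : j = (j - 1) + 1 := by omega
    rw [hj1, Finset.sum_Icc_succ_top (by omega), ← hj1]
    ring
  rw [Finset.sum_congr rfl step, Finset.sum_add_distrib, ← Finset.mul_sum, key_swap n r h]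
  ring
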